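/- For any integral domain D, the ring R(D) is local, and its maximal ideal is generated by the elements 1/f where f ranges over the non-Egyptian nonzero elements of D. -/

import Mathlib

/-!
`R(D)` is additively generated by the reciprocals `1/d`. A sum `y` of reciprocals of Egyptian
elements is `0` or a unit: `(Π e) * y ∈ D` and `Π e` is invertible in `R(D)`.
The heart of the matter is that `1 - Σ tᵢ` is a unit whenever the `tᵢ` are reciprocals of
non-Egyptian elements. By induction, `Π_{i ∈ Q} tᵢ / (1 - Σ_{i ∈ T} tᵢ) ∈ R(D)` for `Q ⊆ T`, the
base case `Q = T` being the reciprocal of an element of `D`; and `1 - Σ_{i ∈ T} tᵢ ≠ 0`, since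
otherwise `tⱼ = 1 - Σ_{i ∈ T, i ≠ j} tᵢ` and `1/tⱼ` would lie in `R(D)`.
Any `x ∈ R(D)` is `y + z` with `y` its Egyptian part and `z` in the ideal generated by the
non-Egyptian reciprocals, and `x = y (1 + y⁻¹ z)` is a unit unless `y = 0`. So that ideal is
exactly the set of nonunits.
-/

noncomputable def recip (D : Type*) [CommRing D] [IsDomain D] : Subring (FractionRing D) :=
  Subring.closure {x | ∃ d : D, d ≠ 0 ∧ x = (algebraMap D (FractionRing D) d)⁻¹}

namespace Multiset

variable {K : Type*} [Field K]

theorem prod_inv_mul_sum_mem (B : Subring K) {t : Multiset K} (ht : ∀ x ∈ t, x⁻¹ ∈ B) :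
    t.prod⁻¹ * t.sum ∈ B := by
  induction t using Multiset.induction with
  | empty => simp
  | cons a t ih =>
    have haB := ht a (mem_cons_self a t)
    have htB : t.prod⁻¹ ∈ B := by
      rw [← prod_map_inv']
      exact multiset_prod_mem _ fun x hx ↦ by
        obtain ⟨y, hy, rfl⟩ := mem_map.1 hx
        exact ht y (mem_cons_of_mem hy)
    by_cases ha : a = 0
    · simp [ha]
    have key : (a ::ₘ t).prod⁻¹ * (a ::ₘ t).sum = t.prod⁻¹ + a⁻¹ * (t.prod⁻¹ * t.sum) := by
      rw [prod_cons, sum_cons, mul_inv, mul_add, mul_right_comm, inv_mul_cancel₀ ha, one_mul]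
      ring
    rw [key]
    exact add_mem htB (mul_mem haB (ih fun x hx ↦ ht x (mem_cons_of_mem hx)))

/-- With `u = 1 - Σ (q + r)` and `u' = 1 - Σ (q + r')` for `r = a ::ₘ r'`, so that `u = u' - a`,
one has `Π q / u = Π q / u' + (Π (a ::ₘ q) / u) * (1 / u')`; this recursion ends at `r = 0`. -/
theorem inv_one_sub_sum_mem_of_forall_le (A : Subring K) {s : Multiset K}
    (hne : ∀ t ≤ s, 1 - t.sum ≠ 0) (hA : ∀ t ≤ s, t.prod * (1 - t.sum)⁻¹ ∈ A) :
    (1 - s.sum)⁻¹ ∈ A := by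
  suffices h : ∀ n q r, card (q + r) = n → q + r ≤ s → q.prod * (1 - (q + r).sum)⁻¹ ∈ A by
    simpa using h _ 0 s rfl (by simp)
  intro n
  induction n using Nat.strong_induction_on with | _ n ihn => ?_
  intro q r hn hle
  induction r using Multiset.induction generalizing q with
  | empty => simpa using hA q (by simpa using hle)
  | cons a r ihr =>
    have hsub : q + r ≤ s := le_trans (by simpa using le_cons_self (q + r) a) hle
    have hlt : card (q + r) < n := by rw [← hn, add_cons, card_cons]; omega
    have h₁ := ihn _ hlt q r rfl hsub
    have h₂ := ihn _ hlt 0 (q + r) (by rw [zero_add]) (by simpa using hsub)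
    have h₃ := ihr (a ::ₘ q) (by simpa [add_comm, add_assoc] using hn)
      (by simpa using hle)
    have hu := hne _ hle
    have hu' := hne _ hsub
    rw [zero_add, prod_zero, one_mul] at h₂
    rw [cons_add, prod_cons, sum_cons] at h₃
    rw [add_cons, sum_cons] at hu ⊢
    have key : q.prod * (1 - (a + (q + r).sum))⁻¹ = q.prod * (1 - (q + r).sum)⁻¹ +
        a * q.prod * (1 - (a + (q + r).sum))⁻¹ * (1 - (q + r).sum)⁻¹ := by
      field_simp
      ring
    rw [key]
    exact add_mem h₁ (mul_mem h₃ h₂)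

theorem one_sub_sum_ne_zero_of_forall_le (A : Subring K) {s : Multiset K}
    (hs : ∀ x ∈ s, x⁻¹ ∉ A) (hA : ∀ t ≤ s, t.prod * (1 - t.sum)⁻¹ ∈ A) :
    ∀ t ≤ s, 1 - t.sum ≠ 0 := by
  intro t
  induction t using Multiset.strongInductionOn with | _ t ih => ?_
  intro hts hzero
  obtain rfl | ⟨a, ha⟩ := t.empty_or_exists_mem
  · simp at hzero
  obtain ⟨t', rfl⟩ := exists_cons_of_mem ha
  have ht's : t' ≤ s := le_trans (le_cons_self t' a) hts
  have hinv : (1 - t'.sum)⁻¹ ∈ A :=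
    inv_one_sub_sum_mem_of_forall_le A
      (fun u hu ↦ ih u (lt_of_le_of_lt hu (lt_cons_self t' a)) (hu.trans ht's))
      (fun u hu ↦ hA u (hu.trans ht's))
  have ha' : 1 - t'.sum = a := by rw [sum_cons] at hzero; linear_combination hzero
  exact hs a (mem_of_le hts ha) (ha' ▸ hinv)

end Multiset

namespace recip

variable {D : Type*} [CommRing D] [IsDomain D]

local notation "F" => FractionRing D
local notation "ι" => algebraMap D (FractionRing D)

variable (D) in
def reciprocals : Submonoid F where
  carrier := {x | x ≠ 0 ∧ x⁻¹ ∈ (ι).range}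
  mul_mem' := by
    rintro x y ⟨hx, d, hd⟩ ⟨hy, e, he⟩
    exact ⟨mul_ne_zero hx hy, d * e, by rw [map_mul, hd, he, mul_inv, mul_comm]⟩
  one_mem' := ⟨one_ne_zero, 1, by simp⟩

variable (D) in
def nonEgyptianReciprocals : Set F := {x | x⁻¹ ∈ (ι).range ∧ x⁻¹ ∉ recip D}

variable (D) in
noncomputable def nonEgyptianIdeal : Ideal (recip D) :=
  Ideal.span {α : recip D | ∃ f : D, f ≠ 0 ∧
    algebraMap D (FractionRing D) f ∉ recip D ∧
    (α : FractionRing D) = (algebraMap D (FractionRing D) f)⁻¹}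

theorem inv_mem_of_mem_range {y : F} (hy : y ∈ (ι).range) : y⁻¹ ∈ recip D := by
  obtain ⟨d, rfl⟩ := hy
  rcases eq_or_ne d 0 with rfl | hd
  · simp
  · exact Subring.subset_closure ⟨d, hd, rfl⟩

theorem reciprocals_subset : (reciprocals D : Set F) ⊆ recip D := fun x ⟨_, hx⟩ ↦ by
  simpa using inv_mem_of_mem_range hx

theorem mem_closure_reciprocals {x : F} (hx : x ∈ recip D) :
    x ∈ AddSubmonoid.closure (reciprocals D : Set F) := by
  have hgen : recip D ≤ Subring.closure (reciprocals D) := Subring.closure_mono <| by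
    rintro _ ⟨d, hd, rfl⟩
    exact ⟨by simpa using hd, d, by simp⟩
  have hneg : -(reciprocals D : Set F) ⊆ reciprocals D := fun x ⟨hx, d, hd⟩ ↦
    ⟨by simpa using hx, -d, by simp [hd]⟩
  have := Subring.mem_closure_iff.1 (hgen hx)
  rwa [Submonoid.closure_eq, ← AddSubgroup.mem_toAddSubmonoid,
    AddSubgroup.closure_toAddSubmonoid, Set.union_eq_left.2 hneg] at this

theorem nonEgyptianReciprocals_subset : nonEgyptianReciprocals D ⊆ recip D :=
  fun x ⟨hx, _⟩ ↦ by simpa using inv_mem_of_mem_range hx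

theorem mul_mem_closure_nonEgyptianReciprocals {r x : F} (hr : r ∈ recip D)
    (hx : x ∈ AddSubmonoid.closure (nonEgyptianReciprocals D)) :
    r * x ∈ AddSubmonoid.closure (nonEgyptianReciprocals D) := by
  have hmul := AddSubmonoid.mul_mem_mul (mem_closure_reciprocals hr) hx
  rw [AddSubmonoid.closure_mul_closure] at hmul
  refine AddSubmonoid.closure_mono ?_ hmul
  rintro _ ⟨y, ⟨hy0, d, hd⟩, z, ⟨⟨e, he⟩, hz⟩, rfl⟩
  refine ⟨⟨d * e, by rw [map_mul, hd, he, mul_inv]⟩, fun hyz ↦ hz ?_⟩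
  have : y * (y * z)⁻¹ = z⁻¹ := by field_simp
  exact this ▸ mul_mem (reciprocals_subset ⟨hy0, d, hd⟩) hyz

theorem one_add_ne_zero_and_inv_mem {x : F}
    (hx : x ∈ AddSubmonoid.closure (nonEgyptianReciprocals D)) :
    1 + x ≠ 0 ∧ (1 + x)⁻¹ ∈ recip D := by
  obtain ⟨t, ht, rfl⟩ := AddSubmonoid.exists_multiset_of_mem_closure hx
  have hsum : 1 + t.sum = 1 - (t.map Neg.neg).sum := by
    rw [Multiset.sum_map_neg', sub_neg_eq_add]
  have hs : ∀ y ∈ t.map Neg.neg, y⁻¹ ∈ (ι).range ∧ y⁻¹ ∉ recip D := by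
    intro y hy
    obtain ⟨z, hz, rfl⟩ := Multiset.mem_map.1 hy
    obtain ⟨hzD, hzR⟩ := ht z hz
    exact ⟨by simpa using neg_mem hzD, fun h ↦ hzR (by simpa using neg_mem h)⟩
  have hA : ∀ u ≤ t.map Neg.neg, u.prod * (1 - u.sum)⁻¹ ∈ recip D := by
    intro u hu
    have hu' : ∀ y ∈ u, y⁻¹ ∈ (ι).range := fun y hy ↦ (hs y (Multiset.mem_of_le hu hy)).1
    have hprod : u.prod⁻¹ ∈ (ι).range := by
      rw [← Multiset.prod_map_inv']
      exact multiset_prod_mem _ fun y hy ↦ by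
        obtain ⟨z, hz, rfl⟩ := Multiset.mem_map.1 hy
        exact hu' z hz
    have := inv_mem_of_mem_range
      (sub_mem hprod (Multiset.prod_inv_mul_sum_mem (ι).range hu'))
    rwa [← mul_one_sub, mul_inv, inv_inv] at this
  have hs' : ∀ y ∈ t.map Neg.neg, y⁻¹ ∉ recip D := fun y hy ↦ (hs y hy).2
  rw [hsum]
  exact ⟨Multiset.one_sub_sum_ne_zero_of_forall_le _ hs' hA _ le_rfl,
    Multiset.inv_one_sub_sum_mem_of_forall_le _
      (Multiset.one_sub_sum_ne_zero_of_forall_le _ hs' hA) hA⟩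

theorem inv_sum_mem {t : Multiset F} (ht : ∀ x ∈ t, x ∈ reciprocals D ∧ x⁻¹ ∈ recip D) :
    t.sum⁻¹ ∈ recip D := by
  have hprod : t.prod⁻¹ ∈ recip D := by
    rw [← Multiset.prod_map_inv']
    exact multiset_prod_mem _ fun y hy ↦ by
      obtain ⟨z, hz, rfl⟩ := Multiset.mem_map.1 hy
      exact (ht z hz).2
  have hne : t.prod ≠ 0 := Multiset.prod_ne_zero fun h0 ↦ (ht 0 h0).1.1 rfl
  have hclear := inv_mem_of_mem_range
    (Multiset.prod_inv_mul_sum_mem (ι).range fun x hx ↦ (ht x hx).1.2)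
  have : t.sum⁻¹ = t.prod⁻¹ * (t.prod⁻¹ * t.sum)⁻¹ := by
    rw [mul_inv, inv_inv, ← mul_assoc, inv_mul_cancel₀ hne, one_mul]
  exact this ▸ mul_mem hprod hclear

theorem mem_closure_nonEgyptianReciprocals_or_inv_mem {x : F} (hx : x ∈ recip D) :
    x ∈ AddSubmonoid.closure (nonEgyptianReciprocals D) ∨ (x ≠ 0 ∧ x⁻¹ ∈ recip D) := by
  classical
  have hcl := mem_closure_reciprocals hx
  obtain ⟨t, ht, rfl⟩ := AddSubmonoid.exists_multiset_of_mem_closure hcl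
  set y := (t.filter fun x ↦ x⁻¹ ∈ recip D).sum
  set z := (t.filter fun x ↦ x⁻¹ ∉ recip D).sum
  have hyz : t.sum = y + z := by rw [← Multiset.sum_add, Multiset.filter_add_not]
  have hz : z ∈ AddSubmonoid.closure (nonEgyptianReciprocals D) :=
    AddSubmonoid.multiset_sum_mem _ _ fun x hx ↦ by
      obtain ⟨hxt, hxR⟩ := Multiset.mem_filter.1 hx
      exact AddSubmonoid.subset_closure ⟨(ht x hxt).2, hxR⟩
  rcases eq_or_ne y 0 with hy | hy
  · exact .inl (by rwa [hyz, hy, zero_add])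
  have hyinv : y⁻¹ ∈ recip D := inv_sum_mem fun x hx ↦ by
    obtain ⟨hxt, hxR⟩ := Multiset.mem_filter.1 hx
    exact ⟨ht x hxt, hxR⟩
  obtain ⟨hne, hinv⟩ :=
    one_add_ne_zero_and_inv_mem (mul_mem_closure_nonEgyptianReciprocals hyinv hz)
  have hfac : t.sum = y * (1 + y⁻¹ * z) := by rw [hyz, mul_add, mul_one, mul_inv_cancel_left₀ hy]
  refine .inr ⟨hfac ▸ mul_ne_zero hy hne, ?_⟩
  rw [hfac, mul_inv]
  exact mul_mem hyinv hinv

theorem mem_nonEgyptianIdeal_iff {x : recip D} :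
    x ∈ nonEgyptianIdeal D ↔ (x : F) ∈ AddSubmonoid.closure (nonEgyptianReciprocals D) := by
  constructor
  · intro hx
    induction hx using Submodule.span_induction with
    | mem α hα =>
      obtain ⟨f, -, hf, hα⟩ := hα
      exact AddSubmonoid.subset_closure ⟨⟨f, by simp [hα]⟩, by simpa [hα] using hf⟩
    | zero => exact zero_mem _
    | add a b _ _ ha hb => exact add_mem ha hb
    | smul r a _ ha => exact mul_mem_closure_nonEgyptianReciprocals r.2 ha
  · intro hx
    have hle : AddSubmonoid.closure (nonEgyptianReciprocals D) ≤
        (nonEgyptianIdeal D).toAddSubmonoid.map (recip D).subtype.toAddMonoidHom := by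
      refine AddSubmonoid.closure_le.2 fun y ⟨⟨f, hf⟩, hfR⟩ ↦ ?_
      refine ⟨⟨y, nonEgyptianReciprocals_subset ⟨⟨f, hf⟩, hfR⟩⟩, Ideal.subset_span ?_, rfl⟩
      refine ⟨f, fun h0 ↦ hfR ?_, by rwa [hf], by simp [hf]⟩
      simp [← hf, h0]
    obtain ⟨m, hm, hmx⟩ := hle hx
    rwa [← Subtype.ext hmx]

theorem mem_nonEgyptianIdeal_iff_not_isUnit {x : recip D} :
    x ∈ nonEgyptianIdeal D ↔ ¬IsUnit x := by
  constructor
  · intro hx hunit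
    have hneg : (-1 : recip D) ∈ nonEgyptianIdeal D :=
      neg_mem (Ideal.eq_top_of_isUnit_mem _ hx hunit ▸ Submodule.mem_top)
    have := (one_add_ne_zero_and_inv_mem (mem_nonEgyptianIdeal_iff.1 hneg)).1
    simp at this
  · intro hx
    refine mem_nonEgyptianIdeal_iff.2 <|
      (mem_closure_nonEgyptianReciprocals_or_inv_mem x.2).resolve_right ?_
    rintro ⟨hne, hinv⟩
    exact hx (IsUnit.of_mul_eq_one (b := ⟨_, hinv⟩) (Subtype.ext (mul_inv_cancel₀ hne)))

end recip

theorem stmt_9 (D : Type*) [CommRing D] [IsDomain D] :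
    IsLocalRing (recip D) ∧
    ∀ m : Ideal (recip D), m.IsMaximal →
      m = Ideal.span {α : recip D | ∃ f : D, f ≠ 0 ∧
        algebraMap D (FractionRing D) f ∉ recip D ∧
        (α : FractionRing D) = (algebraMap D (FractionRing D) f)⁻¹} := by
  have hlocal : IsLocalRing (recip D) := .of_nonunits_add fun a b ha hb ↦ by
    rw [mem_nonunits_iff, ← recip.mem_nonEgyptianIdeal_iff_not_isUnit] at *
    exact add_mem ha hb
  refine ⟨hlocal, fun m hm ↦ ?_⟩
  rw [IsLocalRing.eq_maximalIdeal hm]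
  ext x
  rw [IsLocalRing.mem_maximalIdeal, mem_nonunits_iff]
  exact recip.mem_nonEgyptianIdeal_iff_not_isUnit.symm
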